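/- Let (φ_n) be a sequence of finitely supported functions on Γ with ‖φ_n‖ ≤ 1 in the James-S norm. Then for every ε > 0 and every infinite B ⊆ ℕ there exist finitely many pairwise disjoint s_1,...,s_k ∈ S and an infinite B' ⊆ B such that for every s ∈ S with s ∩ s_i = ∅ for i = 1,...,k, one has limsup_{n∈B'} s*(φ_n) ≤ ε. Moreover k can be taken at most min{n : ε√n > 1}. -/

import Mathlib

open Set Filter Topology
open scoped Classical

variable {Γ : Type*}

/-- Sum of a finitely supported function `φ` over a set `s` (i.e. `s*(φ) = Σ_{a∈s} φ(a)`). -/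
noncomputable def segSum (s : Set Γ) (φ : Γ →₀ ℝ) : ℝ :=
  ∑ a ∈ φ.support, if a ∈ s then φ a else 0

/-- The candidate values `(Σ_i (Σ_{a∈s_i} φ(a))²)^{1/2}` over finite pairwise disjoint
families `{s_1,…,s_n} ⊆ S`. -/
noncomputable def jamesSet (S : Set (Set Γ)) (φ : Γ →₀ ℝ) : Set ℝ :=
  { r | ∃ F : Finset (Set Γ), ↑F ⊆ S ∧ (F : Set (Set Γ)).Pairwise Disjoint ∧
      r = Real.sqrt (∑ s ∈ F, (segSum s φ) ^ 2) }

/-- The James-`S` norm on finitely supported functions. -/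
noncomputable def jamesNorm (S : Set (Set Γ)) (φ : Γ →₀ ℝ) : ℝ :=
  sSup (jamesSet S φ)

/-- The characteristic function of a set, viewed in `Γ → ℝ`. -/
noncomputable def indicatorFun (s : Set Γ) : Γ → ℝ := s.indicator fun _ => 1

/-- A family of subsets of `Γ` is countably intersected (Definition 1.1). -/
structure IsCI (S : Set (Set Γ)) : Prop where
  /-- (a) pointwise closed -/
  closed : IsClosed (indicatorFun '' S)
  /-- (a) members countable -/
  countable : ∀ s ∈ S, s.Countable
  /-- (a) contains singletons -/
  singletons : ∀ γ : Γ, {γ} ∈ S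
  /-- (b) differences are finite disjoint unions of members -/
  diff : ∀ s ∈ S, ∀ t ∈ S, ∃ F : Finset (Set Γ), ↑F ⊆ S ∧
    (F : Set (Set Γ)).Pairwise Disjoint ∧ s \ t = ⋃₀ ↑F
  /-- (c) the enveloping condition -/
  env : ∃ st : Set Γ → Set Γ, (∀ t ∈ S, st t ∈ S ∧ t ⊆ st t) ∧
    ∀ s ∈ S, ∀ n : ℕ, ∀ ts : Fin n → Set Γ, (∀ i, ts i ∈ S) →
      ∃ t ∈ S, t ⊆ s \ (⋃ i, st (ts i)) ∧ (s \ ((⋃ i, st (ts i)) ∪ t)).Finite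
  /-- (d) each `L_s = {s ∩ t : t ∈ S}` is countable -/
  inter_countable : ∀ s ∈ S, { u : Set Γ | ∃ t ∈ S, u = s ∩ t }.Countable

/-- Pairing of a "dual vector" `g : Γ → ℝ` with a finitely supported function. -/
noncomputable def dPair (g : Γ → ℝ) (φ : Γ →₀ ℝ) : ℝ := ∑ a ∈ φ.support, φ a * g a

/-- The unit ball of the dual of `JS`, modelled as those `g : Γ → ℝ` whose pairing with every
finitely supported function is dominated by the James-`S` norm; the product topology on
`Γ → ℝ` is the weak-star topology on this ball. -/
def dualBall (S : Set (Set Γ)) : Set (Γ → ℝ) :=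
  { g | ∀ φ : Γ →₀ ℝ, |dPair g φ| ≤ jamesNorm S φ }

/-- The dual norm of `g` as a functional on `(Φ, ‖·‖_{J-S})`. -/
noncomputable def dualNorm (S : Set (Set Γ)) (g : Γ → ℝ) : ℝ :=
  sSup { r | ∃ φ : Γ →₀ ℝ, jamesNorm S φ ≤ 1 ∧ r = |dPair g φ| }

/-- The set `D = {Σ_{i=1}^n λ_i s_i* : s_i ∈ S pairwise disjoint, Σ λ_i² ≤ 1}`. -/
def Dset (S : Set (Set Γ)) : Set (Γ → ℝ) :=
  { g | ∃ (n : ℕ) (l : Fin n → ℝ) (s : Fin n → Set Γ), (∀ i, s i ∈ S) ∧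
      Pairwise (Function.onFun Disjoint s) ∧ (∑ i, l i ^ 2) ≤ 1 ∧
      g = fun γ => ∑ i, if γ ∈ s i then l i else 0 }

/-!
Fewer than `min {m : ε √m > 1}` pairwise disjoint members of `S` can all carry `s*(φ_n) > ε`
for the same `n`, since their squares alone already give `‖φ_n‖ ≥ ε √m`. So choose greedily:
as long as some `t ∈ S` disjoint from the sets chosen so far has `limsup_{n ∈ B'} t*(φ_n) > ε`,
adjoin `t` and shrink `B'` to the infinitely many `n` with `t*(φ_n) > ε`. Every chosen set then
carries more than `ε` on all of `B'`, so the process stops before that bound is reached.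
-/

lemma segSum_eq_sum_indicator (s : Set Γ) (φ : Γ →₀ ℝ) :
    segSum s φ = ∑ a ∈ φ.support, s.indicator φ a := by
  simp only [segSum, Set.indicator_apply]

lemma sum_abs_segSum_le {F : Finset (Set Γ)} (hF : (F : Set (Set Γ)).Pairwise Disjoint)
    (φ : Γ →₀ ℝ) : ∑ s ∈ F, |segSum s φ| ≤ ∑ a ∈ φ.support, |φ a| := by
  have hpoint (a : Γ) : ∑ s ∈ F, s.indicator (fun b => |φ b|) a ≤ |φ a| := by
    calc ∑ s ∈ F, s.indicator (fun b => |φ b|) a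
        = (⋃ s ∈ F, s).indicator (fun b => |φ b|) a :=
          (Finset.indicator_biUnion_apply F id hF a).symm
      _ ≤ |φ a| := Set.indicator_le_self' (fun _ _ => abs_nonneg _) a
  calc ∑ s ∈ F, |segSum s φ|
      ≤ ∑ s ∈ F, ∑ a ∈ φ.support, s.indicator (fun b => |φ b|) a := by
        refine Finset.sum_le_sum fun s _ => ?_
        rw [segSum_eq_sum_indicator]
        refine (Finset.abs_sum_le_sum_abs _ _).trans_eq (Finset.sum_congr rfl fun a _ => ?_)
        simp only [Set.indicator_apply]
        split_ifs <;> simp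
    _ = ∑ a ∈ φ.support, ∑ s ∈ F, s.indicator (fun b => |φ b|) a := Finset.sum_comm
    _ ≤ ∑ a ∈ φ.support, |φ a| := Finset.sum_le_sum fun a _ => hpoint a

lemma jamesSet_bddAbove (S : Set (Set Γ)) (φ : Γ →₀ ℝ) : BddAbove (jamesSet S φ) := by
  refine ⟨∑ a ∈ φ.support, |φ a|, ?_⟩
  rintro r ⟨F, -, hF, rfl⟩
  have hsq : ∑ s ∈ F, segSum s φ ^ 2 ≤ (∑ s ∈ F, |segSum s φ|) ^ 2 := by
    simpa only [sq_abs] using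
      Finset.sum_sq_le_sq_sum_of_nonneg (s := F) fun s _ => abs_nonneg (segSum s φ)
  refine Real.sqrt_le_iff.2 ⟨Finset.sum_nonneg fun _ _ => abs_nonneg _, hsq.trans ?_⟩
  exact pow_le_pow_left₀ (Finset.sum_nonneg fun _ _ => abs_nonneg _) (sum_abs_segSum_le hF φ) 2

lemma abs_segSum_le_jamesNorm {S : Set (Set Γ)} {t : Set Γ} (ht : t ∈ S) (φ : Γ →₀ ℝ) :
    |segSum t φ| ≤ jamesNorm S φ := by
  refine le_csSup (jamesSet_bddAbove S φ) ⟨{t}, by simpa using ht, by simp, ?_⟩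
  rw [Finset.sum_singleton, Real.sqrt_sq_eq_abs]

lemma segSum_empty (φ : Γ →₀ ℝ) : segSum ∅ φ = 0 := by
  simp [segSum]

lemma mul_sqrt_card_le_jamesNorm {S : Set (Set Γ)} {φ : Γ →₀ ℝ} {ε : ℝ} (hε : 0 ≤ ε) {k : ℕ}
    {s : Fin k → Set Γ} (hS : ∀ i, s i ∈ S) (hd : Pairwise (Function.onFun Disjoint s))
    (hlt : ∀ i, ε < segSum (s i) φ) : ε * Real.sqrt k ≤ jamesNorm S φ := by
  have hinj : Function.Injective s := by
    intro i j hij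
    by_contra hne
    have hempty : s j = ∅ := by simpa [Function.onFun, hij] using hd hne
    have hpos := hlt j
    rw [hempty, segSum_empty] at hpos
    linarith
  have hmem : Real.sqrt (∑ i, segSum (s i) φ ^ 2) ∈ jamesSet S φ := by
    refine ⟨Finset.univ.image s, ?_, ?_, ?_⟩
    · simpa [Set.range_subset_iff] using hS
    · simpa [Set.Pairwise, Function.onFun] using fun i j hij => hd (fun h => hij (congrArg s h))
    · rw [Finset.sum_image fun i _ j _ h => hinj h]
  have hsq : (k : ℝ) * ε ^ 2 ≤ ∑ i, segSum (s i) φ ^ 2 := by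
    simpa [nsmul_eq_mul] using Finset.card_nsmul_le_sum Finset.univ _ (ε ^ 2)
      fun i _ => pow_le_pow_left₀ hε (hlt i).le 2
  calc ε * Real.sqrt k = Real.sqrt (k * ε ^ 2) := by
        rw [Real.sqrt_mul (Nat.cast_nonneg k), Real.sqrt_sq hε, mul_comm]
    _ ≤ Real.sqrt (∑ i, segSum (s i) φ ^ 2) := Real.sqrt_le_sqrt hsq
    _ ≤ jamesNorm S φ := le_csSup (jamesSet_bddAbove S φ) hmem

lemma lt_sInf_of_mul_sqrt_le_one {ε : ℝ} (hε : 0 < ε) {k : ℕ} (hk : ε * Real.sqrt k ≤ 1) :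
    k < sInf { m : ℕ | 1 < ε * Real.sqrt m } := by
  have hne : { m : ℕ | 1 < ε * Real.sqrt m }.Nonempty := by
    obtain ⟨m, hm⟩ := exists_nat_gt ((1 / ε) ^ 2)
    refine ⟨m, ?_⟩
    have : 1 / ε < Real.sqrt m := Real.lt_sqrt_of_sq_lt hm
    rwa [div_lt_iff₀' hε] at this
  refine Nat.lt_of_succ_le (le_csInf hne fun m hm => ?_)
  by_contra! hmk
  have : ε * Real.sqrt m ≤ ε * Real.sqrt k := by gcongr; exact_mod_cast Nat.le_of_lt_succ hmk
  exact (hm.trans_le this).not_ge hk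

lemma infinite_setOf_lt_of_lt_limsup {f : ℕ → ℝ} {B : Set ℕ} {ε : ℝ}
    (hf : IsCoboundedUnder (· ≤ ·) (atTop ⊓ 𝓟 B) f) (h : ε < limsup f (atTop ⊓ 𝓟 B)) :
    { n ∈ B | ε < f n }.Infinite :=
  Nat.frequently_atTop_iff_infinite.1 <|
    frequently_inf_principal.1 (frequently_lt_of_lt_limsup hf h)

structure IsHeavyFamily (S : Set (Set Γ)) (φ : ℕ → Γ →₀ ℝ) (ε : ℝ) {k : ℕ}
    (s : Fin k → Set Γ) (B : Set ℕ) : Prop where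
  mem : ∀ i, s i ∈ S
  pairwise_disjoint : Pairwise (Function.onFun Disjoint s)
  infinite : B.Infinite
  lt_segSum : ∀ n ∈ B, ∀ i, ε < segSum (s i) (φ n)

namespace IsHeavyFamily

variable {S : Set (Set Γ)} {φ : ℕ → Γ →₀ ℝ} {ε : ℝ}

lemma card_lt {k : ℕ} {s : Fin k → Set Γ} {B : Set ℕ} (h : IsHeavyFamily S φ ε s B)
    (hφ : ∀ n, jamesNorm S (φ n) ≤ 1) (hε : 0 < ε) :
    k < sInf { m : ℕ | 1 < ε * Real.sqrt m } := by
  obtain ⟨n, hn⟩ := h.infinite.nonempty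
  exact lt_sInf_of_mul_sqrt_le_one hε <|
    (mul_sqrt_card_le_jamesNorm hε.le h.mem h.pairwise_disjoint (h.lt_segSum n hn)).trans (hφ n)

lemma cons {k : ℕ} {s : Fin k → Set Γ} {B : Set ℕ} (h : IsHeavyFamily S φ ε s B) {C : ℝ}
    (hφ : ∀ n, jamesNorm S (φ n) ≤ C)
    {t : Set Γ} (ht : t ∈ S) (htd : ∀ i, Disjoint t (s i))
    (hlim : ε < limsup (fun n => segSum t (φ n)) (atTop ⊓ 𝓟 B)) :
    IsHeavyFamily S φ ε (Fin.cons t s) { n ∈ B | ε < segSum t (φ n) } where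
  mem := Fin.cases ht h.mem
  pairwise_disjoint := pairwise_fin_succ_iff_of_isSymm.2 ⟨htd, h.pairwise_disjoint⟩
  infinite := by
    have : (atTop ⊓ 𝓟 B).NeBot :=
      frequently_mem_iff_neBot.1 (Nat.frequently_atTop_iff_infinite.2 h.infinite)
    refine infinite_setOf_lt_of_lt_limsup (isCoboundedUnder_le_of_le _ (x := -C) fun n => ?_) hlim
    linarith [(abs_le.1 ((abs_segSum_le_jamesNorm ht (φ n)).trans (hφ n))).1]
  lt_segSum n hn := Fin.cases hn.2 (h.lt_segSum n hn.1)

theorem exists_limsup_le {k : ℕ} {s : Fin k → Set Γ} {B : Set ℕ} (h : IsHeavyFamily S φ ε s B)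
    (hφ : ∀ n, jamesNorm S (φ n) ≤ 1) (hε : 0 < ε) :
    ∃ (k' : ℕ) (s' : Fin k' → Set Γ), (∀ i, s' i ∈ S) ∧ Pairwise (Function.onFun Disjoint s') ∧
      k' ≤ sInf { m : ℕ | 1 < ε * Real.sqrt m } ∧
      ∃ B' ⊆ B, B'.Infinite ∧ ∀ t ∈ S, (∀ i, t ∩ s' i = ∅) →
        limsup (fun n => segSum t (φ n)) (atTop ⊓ 𝓟 B') ≤ ε := by
  have hk := h.card_lt hφ hε
  by_cases hstop : ∀ t ∈ S, (∀ i, t ∩ s i = ∅) →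
      limsup (fun n => segSum t (φ n)) (atTop ⊓ 𝓟 B) ≤ ε
  · exact ⟨k, s, h.mem, h.pairwise_disjoint, hk.le, B, subset_rfl, h.infinite, hstop⟩
  push Not at hstop
  obtain ⟨t, ht, htd, hlim⟩ := hstop
  have hnext := h.cons hφ ht (fun i => disjoint_iff_inter_eq_empty.2 (htd i)) hlim
  obtain ⟨k', s', hS', hd', hk', B', hB', hinf, hlimsup⟩ := hnext.exists_limsup_le hφ hε
  exact ⟨k', s', hS', hd', hk', B', hB'.trans (sep_subset _ _), hinf, hlimsup⟩
termination_by sInf { m : ℕ | 1 < ε * Real.sqrt m } - k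
decreasing_by omega

end IsHeavyFamily

/-- Claim 1 of Lemma 2.8: for `(φ_n)` in the unit ball of the James-`S` norm, every `ε > 0`
and every infinite `B ⊆ ℕ`, there are pairwise disjoint `s_1,…,s_k ∈ S`, with
`k ≤ min{m : ε√m > 1}`, and an infinite `B' ⊆ B` such that every `s ∈ S` disjoint from all
the `s_i` satisfies `limsup_{n∈B'} s*(φ_n) ≤ ε`. -/
theorem stmt11 {Γ : Type*} (S : Set (Set Γ)) (φ : ℕ → Γ →₀ ℝ)
    (hφ : ∀ n, jamesNorm S (φ n) ≤ 1)
    (ε : ℝ) (hε : 0 < ε) (B : Set ℕ) (hB : B.Infinite) :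
    ∃ (k : ℕ) (s : Fin k → Set Γ), (∀ i, s i ∈ S) ∧ Pairwise (Function.onFun Disjoint s) ∧
      k ≤ sInf { m : ℕ | 1 < ε * Real.sqrt m } ∧
      ∃ B' ⊆ B, B'.Infinite ∧ ∀ t ∈ S, (∀ i, t ∩ s i = ∅) →
        Filter.limsup (fun n => segSum t (φ n))
          (Filter.atTop ⊓ Filter.principal B') ≤ ε := by
  have hempty : IsHeavyFamily S φ ε (Fin.elim0 : Fin 0 → Set Γ) B :=
    { mem := fun i => i.elim0
      pairwise_disjoint := fun i => i.elim0
      infinite := hB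
      lt_segSum := fun _ _ i => i.elim0 }
  exact hempty.exists_limsup_le hφ hε
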